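/- arXiv:2507.22739 — 4 statements merged into one kernel-verified Lean document; each statement's English description precedes it below -/
import Mathlib

section
/- Let X be a uniformly convex, uniformly smooth real Banach space, x ∈ X with ‖x‖ = 1, and let H₋(Jx) = {y ∈ X : ⟨Jx, y⟩ ≤ 0} be the closed halfspace determined by the duality map at x. Then the polar of the halfspace H₋(Jx) (as a closed convex cone) is exactly the ray {t·x : t ≥ 0}. -/
/-- A real normed space is uniformly smooth. -/
def UniformlySmooth (X : Type*) [NormedAddCommGroup X] [NormedSpace ℝ X] : Prop :=
  ∀ ε : ℝ, 0 < ε → ∃ δ : ℝ, 0 < δ ∧ ∀ x y : X, ‖x‖ = 1 → ‖y‖ ≤ δ →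
    ‖x + y‖ + ‖x - y‖ ≤ 2 + ε * ‖y‖

/-!
Write `f = Jx`, so `‖f‖ = 1 = f x` and `H₋ = {f ≤ 0}`. Since `f (y - z) ≤ ‖y - z‖`, the distance
from `y` to `H₋` is `max (f y) 0`, attained at `y - (max (f y) 0) • x`. Hence `P y = 0` forces
`f y = ‖y‖`, and for `y = t • x` the residual `y - P y` satisfies `f = ‖·‖` as well. By strict
convexity, `f` attains its norm only on the ray through `x`, which pins down both vectors.
-/

section NormingFunctional

variable {X : Type*} [NormedAddCommGroup X] [NormedSpace ℝ X] {f : StrongDual ℝ X}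

lemma apply_le_norm_of_opNorm_le_one (hf : ‖f‖ ≤ 1) (z : X) : f z ≤ ‖z‖ :=
  (le_abs_self _).trans <| by simpa using f.le_of_opNorm_le hf z

lemma eq_norm_smul_of_apply_eq_norm [StrictConvexSpace ℝ X] (hf : ‖f‖ ≤ 1) {x y : X}
    (hx : ‖x‖ = 1) (hfx : f x = 1) (hfy : f y = ‖y‖) : y = ‖y‖ • x := by
  have hray : SameRay ℝ x y := by
    refine sameRay_iff_norm_add.mpr (le_antisymm (norm_add_le x y) ?_)
    calc ‖x‖ + ‖y‖ = f (x + y) := by rw [map_add, hfx, hfy, hx]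
      _ ≤ ‖x + y‖ := apply_le_norm_of_opNorm_le_one hf _
  obtain ⟨r, hr, rfl⟩ := hray.exists_nonneg_left (norm_ne_zero_iff.mp (by simp [hx]))
  rw [norm_smul, hx, mul_one, Real.norm_of_nonneg hr]

lemma norm_sub_eq_max_of_isNearest_halfspace (hf : ‖f‖ ≤ 1) {x : X} (hx : ‖x‖ = 1)
    (hfx : f x = 1) {y p : X} (hp : f p ≤ 0) (hnear : ∀ z, f z ≤ 0 → ‖y - p‖ ≤ ‖y - z‖) :
    ‖y - p‖ = max (f y) 0 := by
  refine le_antisymm ?_ (max_le ?_ (norm_nonneg _))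
  · have hmem : f (y - max (f y) 0 • x) ≤ 0 := by
      simp only [map_sub, map_smul, hfx, smul_eq_mul, mul_one, sub_nonpos, le_max_left]
    have := hnear _ hmem
    rwa [sub_sub_cancel, norm_smul, hx, mul_one, Real.norm_of_nonneg (le_max_right _ _)] at this
  · calc f y ≤ f (y - p) := by rw [map_sub]; linarith
      _ ≤ ‖y - p‖ := apply_le_norm_of_opNorm_le_one hf _

end NormingFunctional

theorem polar_halfspace_eq_ray_general {X : Type*} [NormedAddCommGroup X] [NormedSpace ℝ X]
    [UniformConvexSpace X]
    (J : X → StrongDual ℝ X)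
    (hJ : ∀ x : X, J x x = ‖x‖ ^ 2 ∧ ‖J x‖ = ‖x‖)
    (x : X) (hx : ‖x‖ = 1)
    (P : X → X)
    (hP : ∀ y : X, P y ∈ {z : X | J x z ≤ 0} ∧ ∀ z ∈ {z : X | J x z ≤ 0}, ‖y - P y‖ ≤ ‖y - z‖) :
    {y | P y = 0} = {y : X | ∃ t : ℝ, 0 ≤ t ∧ y = t • x} := by
  have hf : ‖J x‖ ≤ 1 := by rw [(hJ x).2, hx]
  have hfx : J x x = 1 := by rw [(hJ x).1, hx, one_pow]
  have hdist (y : X) : ‖y - P y‖ = max (J x y) 0 :=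
    norm_sub_eq_max_of_isNearest_halfspace hf hx hfx (hP y).1 (hP y).2
  ext y
  constructor
  · intro (hy : P y = 0)
    have hnorm : ‖y‖ = max (J x y) 0 := by simpa [hy] using hdist y
    have hfy : J x y = ‖y‖ := by
      have hbound : |J x y| ≤ ‖y‖ := by simpa using (J x).le_of_opNorm_le hf y
      rcases max_cases (J x y) 0 with h | h <;> linarith [neg_abs_le (J x y)]
    exact ⟨‖y‖, norm_nonneg y, eq_norm_smul_of_apply_eq_norm hf hx hfx hfy⟩
  · rintro ⟨t, ht, rfl⟩
    have hres : ‖t • x - P (t • x)‖ = t := by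
      rw [hdist, map_smul, hfx, smul_eq_mul, mul_one, max_eq_left ht]
    have hfres : J x (t • x - P (t • x)) = ‖t • x - P (t • x)‖ := by
      refine le_antisymm (apply_le_norm_of_opNorm_le_one hf _) ?_
      rw [hres, map_sub, map_smul, hfx, smul_eq_mul, mul_one]
      have hp : J x (P (t • x)) ≤ 0 := (hP _).1
      linarith
    have hres_eq := eq_norm_smul_of_apply_eq_norm hf hx hfx hfres
    rwa [hres, sub_eq_self] at hres_eq

/-- In a uniformly convex, uniformly smooth real Banach space, the polar of the
halfspace `H₋(Jx) = {y | ⟨Jx, y⟩ ≤ 0}` (where `‖x‖ = 1`) is exactly the ray `{t • x | t ≥ 0}`. -/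
theorem polar_halfspace_eq_ray {X : Type*} [NormedAddCommGroup X] [NormedSpace ℝ X]
    [CompleteSpace X] [UniformConvexSpace X] (hsm : UniformlySmooth X)
    (J : X → StrongDual ℝ X)
    (hJ : ∀ x : X, J x x = ‖x‖ ^ 2 ∧ ‖J x‖ = ‖x‖)
    (x : X) (hx : ‖x‖ = 1)
    (P : X → X)
    (hP : ∀ y : X, P y ∈ {z : X | J x z ≤ 0} ∧ ∀ z ∈ {z : X | J x z ≤ 0}, ‖y - P y‖ ≤ ‖y - z‖) :
    {y | P y = 0} = {y : X | ∃ t : ℝ, 0 ≤ t ∧ y = t • x} :=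
  polar_halfspace_eq_ray_general J hJ x hx P hP
end

section
/- Let X be a uniformly convex, uniformly smooth real Banach space with duality map J. Suppose that for every pair u, v ∈ X° of points in the polar of a closed convex cone K the segment [u,v] lies in the polar of the wedge generated by the duality images, i.e., suppose every wedge (intersection over an arc of dual unit vectors of halfspaces H₋(J*c)) has convex polar. Then every closed convex cone in X has convex polar. -/
/-- The polar of a closed convex cone `K`: the set of points whose metric projection onto `K`
is `0`, i.e. the points having `0` as a nearest point of `K`. -/
def conePolar {X : Type*} [NormedAddCommGroup X] (K : Set X) : Set X :=
  {x | ∀ z ∈ K, ‖x‖ ≤ ‖x - z‖}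

/-- The minor arc `δ(a,b)` of the dual meridian through `a` and `b`: unit functionals that are
nonnegative combinations of `a` and `b`. -/
def dualArc {X : Type*} [NormedAddCommGroup X] [NormedSpace ℝ X]
    (a b : StrongDual ℝ X) : Set (StrongDual ℝ X) :=
  {c | ‖c‖ = 1 ∧ ∃ l m : ℝ, 0 ≤ l ∧ 0 ≤ m ∧ c = l • a + m • b}

/-- The wedge engendered by the arc `δ(a,b)`: the intersection of the halfspaces `H₋(c)`. -/
def wedge {X : Type*} [NormedAddCommGroup X] [NormedSpace ℝ X]
    (a b : StrongDual ℝ X) : Set X :=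
  {x | ∀ c ∈ dualArc a b, c x ≤ 0}

/-!
If `u ≠ 0` lies in the polar of a convex cone `K`, separating the ball `B(u, ‖u‖)` from `K`
yields a unit functional `f` norming `u` with `K ⊆ {f ≤ 0}`; take `g` likewise for `v`.
If `g = f`, then `f` norms every convex combination of `u` and `v`. If `g = -f`, strict
convexity puts `u` and `-v` on one ray, so `±f` norms each combination while `K ⊆ ker f`.
Otherwise `K ⊆ wedge f g`, whose polar contains `u` and `v` and is convex by hypothesis;
polars reverse inclusions.
-/

open Metric

section

variable {X : Type*} [NormedAddCommGroup X]

theorem conePolar_anti {K L : Set X} (hKL : K ⊆ L) : conePolar L ⊆ conePolar K :=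
  fun _ hx z hz => hx z (hKL hz)

variable [NormedSpace ℝ X]

theorem starConvex_conePolar (K : Set X) : StarConvex ℝ 0 (conePolar K) := by
  refine starConvex_zero_iff.2 fun u hu t ht0 ht1 z hz => ?_
  calc ‖t • u‖ = ‖u‖ - (1 - t) * ‖u‖ := by rw [norm_smul, Real.norm_of_nonneg ht0]; ring
    _ ≤ ‖u - z‖ - ‖(1 - t) • u‖ := by
        rw [norm_smul, Real.norm_of_nonneg (sub_nonneg.2 ht1)]; linarith [hu z hz]
    _ ≤ ‖t • u - z‖ := by
        rw [sub_le_iff_le_add', show u - z = (1 - t) • u + (t • u - z) by module]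
        exact norm_add_le _ _

theorem apply_le_norm_of_norm_le_one {g : StrongDual ℝ X} (hg : ‖g‖ ≤ 1) (x : X) :
    g x ≤ ‖x‖ := by
  simpa using (Real.le_norm_self _).trans (g.le_of_opNorm_le hg x)

theorem mem_conePolar_of_apply_eq_norm {K : Set X} {g : StrongDual ℝ X} (hg : ‖g‖ ≤ 1)
    {x : X} (hx : g x = ‖x‖) (hK : ∀ z ∈ K, g z ≤ 0) : x ∈ conePolar K := fun z hz =>
  calc ‖x‖ ≤ g (x - z) := by rw [map_sub, hx]; linarith [hK z hz]
    _ ≤ ‖x - z‖ := apply_le_norm_of_norm_le_one hg _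

theorem mem_conePolar_of_abs_apply_eq_norm {K : Set X} {g : StrongDual ℝ X} (hg : ‖g‖ ≤ 1)
    {x : X} (hx : |g x| = ‖x‖) (hK : ∀ z ∈ K, g z = 0) : x ∈ conePolar K := fun z hz =>
  calc ‖x‖ = ‖g (x - z)‖ := by rw [map_sub, hK z hz, sub_zero, Real.norm_eq_abs, hx]
    _ ≤ ‖x - z‖ := by simpa using g.le_of_opNorm_le hg (x - z)

theorem convex_setOf_apply_eq_norm {g : StrongDual ℝ X} (hg : ‖g‖ ≤ 1) :
    Convex ℝ {x | g x = ‖x‖} := by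
  intro u hu v hv a b ha hb _
  refine le_antisymm (apply_le_norm_of_norm_le_one hg _) ?_
  calc ‖a • u + b • v‖ ≤ a * ‖u‖ + b * ‖v‖ := by
        simpa [norm_smul, Real.norm_of_nonneg ha, Real.norm_of_nonneg hb] using
          norm_add_le (a • u) (b • v)
    _ = g (a • u + b • v) := by simp [hu.symm, hv.symm]

theorem sameRay_of_apply_eq_norm [StrictConvexSpace ℝ X] {g : StrongDual ℝ X} (hg : ‖g‖ ≤ 1)
    {x y : X} (hx : g x = ‖x‖) (hy : g y = ‖y‖) : SameRay ℝ x y := by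
  refine sameRay_iff_norm_add.2 (le_antisymm (norm_add_le x y) ?_)
  calc ‖x‖ + ‖y‖ = g (x + y) := by rw [map_add, hx, hy]
    _ ≤ ‖x + y‖ := apply_le_norm_of_norm_le_one hg _

theorem abs_apply_smul_add_smul_eq_norm [StrictConvexSpace ℝ X] {g : StrongDual ℝ X}
    (hg : ‖g‖ ≤ 1) {u v : X} (hu : g u = ‖u‖) (hv : g v = -‖v‖) {a b : ℝ} (ha : 0 ≤ a)
    (hb : 0 ≤ b) : |g (a • u + b • v)| = ‖a • u + b • v‖ := by
  have hv' : g (-v) = ‖-v‖ := by rw [map_neg, hv, neg_neg, norm_neg]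
  have hray := ((sameRay_of_apply_eq_norm hg hu hv').nonneg_smul_left ha).nonneg_smul_right hb
  rw [show a • u + b • v = a • u - b • -v by module, hray.norm_sub]
  simp [norm_smul, Real.norm_of_nonneg ha, Real.norm_of_nonneg hb, hu, hv, ← sub_eq_add_neg]

theorem norm_mul_le_neg_apply_of_neg_on_ball {f : StrongDual ℝ X} {u : X} {r : ℝ} (hr : 0 < r)
    (hf : ∀ x ∈ ball u r, f x < 0) : ‖f‖ * r ≤ -f u := by
  rw [← le_div_iff₀ hr]
  refine le_of_forall_lt fun s hs => ?_
  obtain ⟨x, hx1, hsx⟩ := f.exists_lt_apply_of_lt_opNorm hs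
  have hmem : ∀ c : ℝ, |c| = 1 → u + (c * r) • x ∈ ball u r := fun c hc => by
    rw [mem_ball, dist_self_add_left, norm_smul, Real.norm_eq_abs, abs_mul, hc,
      abs_of_pos hr]
    nlinarith
  have h₁ := hf _ (hmem 1 abs_one)
  have h₂ := hf _ (hmem (-1) (by simp))
  simp only [map_add, map_smul, smul_eq_mul] at h₁ h₂
  rw [lt_div_iff₀ hr]
  rw [Real.norm_eq_abs] at hsx
  cases abs_cases (f x) <;> nlinarith

theorem apply_nonneg_of_le_on_cone {K : Set X} (hcone : ∀ t : ℝ, 0 ≤ t → ∀ x ∈ K, t • x ∈ K)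
    {f : StrongDual ℝ X} {c : ℝ} (hc : ∀ z ∈ K, c ≤ f z) : ∀ z ∈ K, 0 ≤ f z := by
  intro z hz
  by_contra! hneg
  have hscaled := hc _ (hcone ((c - 1) / f z) (div_nonneg_of_nonpos (by
    nlinarith [hc z hz]) hneg.le) z hz)
  rw [map_smul, smul_eq_mul, div_mul_cancel₀ _ hneg.ne] at hscaled
  linarith

theorem exists_norming_support {K : Set X} (hK : Convex ℝ K) (h0 : (0 : X) ∈ K)
    (hcone : ∀ t : ℝ, 0 ≤ t → ∀ x ∈ K, t • x ∈ K) {u : X} (hu : u ∈ conePolar K)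
    (hu0 : u ≠ 0) : ∃ g : StrongDual ℝ X, ‖g‖ = 1 ∧ g u = ‖u‖ ∧ ∀ z ∈ K, g z ≤ 0 := by
  have hun : 0 < ‖u‖ := norm_pos_iff.2 hu0
  have hdisj : Disjoint (ball u ‖u‖) K := Set.disjoint_left.2 fun z hzb hzK => by
    rw [mem_ball, dist_comm, dist_eq_norm] at hzb
    linarith [hu z hzK]
  obtain ⟨f, c, hball, hKc⟩ := geometric_hahn_banach_open (convex_ball u ‖u‖) isOpen_ball hK hdisj
  have hneg : ∀ x ∈ ball u ‖u‖, f x < 0 := fun x hx =>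
    (hball x hx).trans_le (by simpa using hKc 0 h0)
  have hnorm := norm_mul_le_neg_apply_of_neg_on_ball hun hneg
  have hfu : f u < 0 := hneg u (mem_ball_self hun)
  have hle : -f u ≤ ‖f‖ * ‖u‖ := (neg_le_abs _).trans (f.le_opNorm u)
  have hf : 0 < ‖f‖ := by nlinarith
  refine ⟨-‖f‖⁻¹ • f, ?_, ?_, fun z hz => ?_⟩
  · rw [norm_smul, norm_neg, norm_inv, norm_norm, inv_mul_cancel₀ hf.ne']
  · simp only [smul_apply, smul_eq_mul, neg_mul]
    field_simp
    linarith
  · have := apply_nonneg_of_le_on_cone hcone hKc z hz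
    simp only [smul_apply, smul_eq_mul, neg_mul, neg_nonpos]
    positivity

theorem apply_nonpos_of_mem_wedge_left {a b : StrongDual ℝ X} (ha : ‖a‖ = 1) {z : X}
    (hz : z ∈ wedge a b) : a z ≤ 0 :=
  hz a ⟨ha, 1, 0, zero_le_one, le_rfl, by simp⟩

theorem apply_nonpos_of_mem_wedge_right {a b : StrongDual ℝ X} (hb : ‖b‖ = 1) {z : X}
    (hz : z ∈ wedge a b) : b z ≤ 0 :=
  hz b ⟨hb, 0, 1, le_rfl, zero_le_one, by simp⟩

theorem subset_wedge {K : Set X} {a b : StrongDual ℝ X} (ha : ∀ z ∈ K, a z ≤ 0)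
    (hb : ∀ z ∈ K, b z ≤ 0) : K ⊆ wedge a b := by
  rintro z hz c ⟨-, l, m, hl, hm, rfl⟩
  simp only [add_apply, smul_apply, smul_eq_mul]
  nlinarith [ha z hz, hb z hz]

end

theorem convex_polar_of_wedges_general {X : Type*} [NormedAddCommGroup X] [NormedSpace ℝ X]
    [UniformConvexSpace X]
    (hwedge : ∀ a b : StrongDual ℝ X, ‖a‖ = 1 → ‖b‖ = 1 → b ≠ a → b ≠ -a →
      Convex ℝ (conePolar (wedge a b))) :
    ∀ K : Set X, IsClosed K → Convex ℝ K → (0 : X) ∈ K →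
      (∀ t : ℝ, 0 ≤ t → ∀ x ∈ K, t • x ∈ K) → Convex ℝ (conePolar K) := by
  intro K _ hK h0 hcone u hu v hv a b ha hb hab
  rcases eq_or_ne u 0 with rfl | hu0
  · exact starConvex_conePolar K hv ha hb hab
  rcases eq_or_ne v 0 with rfl | hv0
  · simpa [add_comm] using starConvex_conePolar K hu hb ha (by linarith)
  obtain ⟨f, hf1, hfu, hfK⟩ := exists_norming_support hK h0 hcone hu hu0
  obtain ⟨g, hg1, hgv, hgK⟩ := exists_norming_support hK h0 hcone hv hv0
  by_cases hgf : g = f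
  · subst hgf
    exact mem_conePolar_of_apply_eq_norm hg1.le
      (convex_setOf_apply_eq_norm hg1.le hfu hgv ha hb hab) hgK
  by_cases hgf' : g = -f
  · subst hgf'
    have hfv : f v = -‖v‖ := by simpa [neg_eq_iff_eq_neg] using hgv
    refine mem_conePolar_of_abs_apply_eq_norm hf1.le
      (abs_apply_smul_add_smul_eq_norm hf1.le hfu hfv ha hb) fun z hz => ?_
    exact le_antisymm (hfK z hz) (by simpa using hgK z hz)
  have hu' : u ∈ conePolar (wedge f g) :=
    mem_conePolar_of_apply_eq_norm hf1.le hfu fun _ => apply_nonpos_of_mem_wedge_left hf1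
  have hv' : v ∈ conePolar (wedge f g) :=
    mem_conePolar_of_apply_eq_norm hg1.le hgv fun _ => apply_nonpos_of_mem_wedge_right hg1
  exact conePolar_anti (subset_wedge hfK hgK) (hwedge f g hf1 hg1 hgf hgf' hu' hv' ha hb hab)

/-- In a uniformly convex, uniformly smooth real Banach space, if every wedge
has convex polar, then every closed convex cone has convex polar. -/
theorem convex_polar_of_wedges {X : Type*} [NormedAddCommGroup X] [NormedSpace ℝ X]
    [CompleteSpace X] [UniformConvexSpace X] (hsm : UniformlySmooth X)
    (hwedge : ∀ a b : StrongDual ℝ X, ‖a‖ = 1 → ‖b‖ = 1 → b ≠ a → b ≠ -a →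
      Convex ℝ (conePolar (wedge a b))) :
    ∀ K : Set X, IsClosed K → Convex ℝ K → (0 : X) ∈ K →
      (∀ t : ℝ, 0 ≤ t → ∀ x ∈ K, t • x ∈ K) → Convex ℝ (conePolar K) :=
  convex_polar_of_wedges_general hwedge
end

section
/- Let X be a uniformly convex, uniformly smooth real Banach space with duality map J and inverse J*. Every closed convex cone in X has a convex polar if and only if J* maps every two-dimensional linear subspace of X* onto a two-dimensional linear subspace of X. -/
open Module Set Function

section UniformlySmooth

variable {X : Type*} [NormedAddCommGroup X] [NormedSpace ℝ X]

theorem UniformlySmooth.exists_norm_add_add_norm_sub_le (hsm : UniformlySmooth X) {ε : ℝ}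
    (hε : 0 < ε) : ∃ δ > 0, ∀ x y : X, ‖y‖ ≤ δ * ‖x‖ →
      ‖x + y‖ + ‖x - y‖ ≤ 2 * ‖x‖ + ε * ‖y‖ := by
  obtain ⟨δ, hδ, h⟩ := hsm ε hε
  refine ⟨δ, hδ, fun x y hy => ?_⟩
  rcases eq_or_ne x 0 with rfl | hx
  · obtain rfl : y = 0 := norm_le_zero_iff.mp (by simpa using hy)
    simp
  have hx' : 0 < ‖x‖ := norm_pos_iff.mpr hx
  have key := h (‖x‖⁻¹ • x) (‖x‖⁻¹ • y) (by simp [norm_smul, hx'.ne'])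
    (by rw [norm_smul, norm_inv, norm_norm, inv_mul_le_iff₀ hx', mul_comm]; exact hy)
  rw [← smul_add, ← smul_sub, norm_smul, norm_smul, norm_smul, norm_inv, norm_norm] at key
  have := mul_le_mul_of_nonneg_left key hx'.le
  field_simp at this
  linarith

theorem UniformlySmooth.apply_le_of_forall_pos (hsm : UniformlySmooth X) {x z : X} {c : ℝ}
    {φ : StrongDual ℝ X} (hφx : φ x = ‖x‖ ^ 2) (hφ : ‖φ‖ ≤ ‖x‖)
    (h : ∀ t > 0, ‖x‖ ^ 2 - t * c ≤ ‖x‖ * ‖x - t • z‖) : φ z ≤ c := by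
  rcases eq_or_ne x 0 with rfl | hx
  · obtain rfl : φ = 0 := norm_le_zero_iff.mp (by simpa using hφ)
    simpa using h 1 one_pos
  have hx' : 0 < ‖x‖ := norm_pos_iff.mpr hx
  suffices ∀ ε > 0, φ z ≤ c + ε * (‖x‖ * ‖z‖) by
    refine le_of_forall_pos_le_add fun ε hε => ?_
    have hM : 0 < ‖x‖ * ‖z‖ + 1 := by positivity
    calc φ z ≤ c + ε / (‖x‖ * ‖z‖ + 1) * (‖x‖ * ‖z‖) := this _ (by positivity)
      _ ≤ c + ε := by
        rw [div_mul_eq_mul_div]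
        gcongr
        rw [div_le_iff₀ hM]
        nlinarith
  -- Add `φ (x + t • z) ≤ ‖x‖ * ‖x + t • z‖` to `h t` and compare with uniform smoothness at `x`
  -- for a step `t` of size about `δ * ‖x‖ / ‖z‖`.
  intro ε hε
  obtain ⟨δ, hδ, hsmooth⟩ := hsm.exists_norm_add_add_norm_sub_le hε
  set t := δ * ‖x‖ / (‖z‖ + 1)
  have ht : 0 < t := by positivity
  have htz : ‖t • z‖ = t * ‖z‖ := by rw [norm_smul, Real.norm_of_nonneg ht.le]
  have hsum := hsmooth x (t • z) (by
    rw [htz, div_mul_eq_mul_div, div_le_iff₀ (by positivity)]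
    nlinarith [norm_nonneg z, mul_pos hδ hx'])
  have hplus : ‖x‖ ^ 2 + t * φ z ≤ ‖x‖ * ‖x + t • z‖ := by
    calc ‖x‖ ^ 2 + t * φ z = φ (x + t • z) := by simp [hφx]
      _ ≤ ‖x‖ * ‖x + t • z‖ := (Real.le_norm_self _).trans (φ.le_of_opNorm_le hφ _)
  have hminus := h t ht
  rw [htz] at hsum
  have : t * (φ z - c) ≤ t * (ε * (‖x‖ * ‖z‖)) := by nlinarith
  linarith [le_of_mul_le_mul_left this ht]

theorem UniformlySmooth.eq_of_apply_self (hsm : UniformlySmooth X) {x : X}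
    {φ ψ : StrongDual ℝ X} (hφx : φ x = ‖x‖ ^ 2) (hφ : ‖φ‖ ≤ ‖x‖) (hψx : ψ x = ‖x‖ ^ 2)
    (hψ : ‖ψ‖ ≤ ‖x‖) : φ = ψ := by
  have key {φ ψ : StrongDual ℝ X} (hφx : φ x = ‖x‖ ^ 2) (hφ : ‖φ‖ ≤ ‖x‖)
      (hψx : ψ x = ‖x‖ ^ 2) (hψ : ‖ψ‖ ≤ ‖x‖) (y : X) : φ y ≤ ψ y := by
    refine hsm.apply_le_of_forall_pos hφx hφ fun t _ => ?_
    calc ‖x‖ ^ 2 - t * ψ y = ψ (x - t • y) := by simp [hψx]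
      _ ≤ ‖x‖ * ‖x - t • y‖ := (Real.le_norm_self _).trans (ψ.le_of_opNorm_le hψ _)
  ext y
  exact le_antisymm (key hφx hφ hψx hψ y) (key hψx hψ hφx hφ y)

end UniformlySmooth

section DualityMap

variable {X : Type*} [NormedAddCommGroup X] [NormedSpace ℝ X]

def IsDualityMap (J : X → StrongDual ℝ X) : Prop :=
  ∀ x, J x x = ‖x‖ ^ 2 ∧ ‖J x‖ = ‖x‖

variable {J : X → StrongDual ℝ X}

theorem IsDualityMap.map_zero (hJ : IsDualityMap J) : J 0 = 0 :=
  norm_eq_zero.mp <| by rw [(hJ 0).2, norm_zero]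

theorem IsDualityMap.eq_zero_of_apply_self (hJ : IsDualityMap J) {x : X} (hx : J x x = 0) :
    x = 0 := by
  rwa [(hJ x).1, sq_eq_zero_iff, norm_eq_zero] at hx

theorem IsDualityMap.map_smul (hJ : IsDualityMap J) (hsm : UniformlySmooth X) (c : ℝ) (x : X) :
    J (c • x) = c • J x := by
  refine hsm.eq_of_apply_self (hJ _).1 (hJ _).2.le ?_ ?_
  · rw [smul_apply, (J x).map_smul, (hJ x).1, norm_smul, mul_pow, Real.norm_eq_abs, sq_abs,
      smul_eq_mul, smul_eq_mul]
    ring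
  · rw [norm_smul, norm_smul, (hJ x).2]

theorem IsDualityMap.mem_conePolar_iff (hJ : IsDualityMap J) (hsm : UniformlySmooth X)
    {K : Set X} (hK : ∀ t : ℝ, 0 ≤ t → ∀ z ∈ K, t • z ∈ K) {x : X} :
    x ∈ conePolar K ↔ ∀ z ∈ K, J x z ≤ 0 := by
  constructor
  · intro hx z hz
    refine hsm.apply_le_of_forall_pos (hJ x).1 (hJ x).2.le fun t ht => ?_
    simpa [sq] using mul_le_mul_of_nonneg_left (hx _ (hK t ht.le z hz)) (norm_nonneg x)
  · intro h z hz
    have hsq : ‖x‖ * ‖x‖ ≤ ‖x‖ * ‖x - z‖ :=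
      calc ‖x‖ * ‖x‖ = J x (x - z) + J x z := by rw [← map_add, sub_add_cancel, (hJ x).1, sq]
        _ ≤ ‖x‖ * ‖x - z‖ + 0 :=
          add_le_add ((Real.le_norm_self _).trans ((J x).le_of_opNorm_le (hJ x).2.le _)) (h z hz)
        _ = ‖x‖ * ‖x - z‖ := add_zero _
    rcases (norm_nonneg x).eq_or_lt with h0 | h0
    · rw [← h0]
      exact norm_nonneg _
    · exact le_of_mul_le_mul_left hsq h0

theorem IsDualityMap.norm_sub_le_of_norm_eq_one (hJ : IsDualityMap J) (hsm : UniformlySmooth X)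
    {ε : ℝ} (hε : 0 < ε) :
    ∃ δ > 0, ∀ u v : X, ‖u‖ = 1 → ‖v‖ = 1 → ‖J u - J v‖ ≤ ε + ‖u - v‖ / δ := by
  obtain ⟨δ, hδ, hsmooth⟩ := hsm ε hε
  refine ⟨δ, hδ, fun u v hu hv => ?_⟩
  have hbound {u v w : X} (hu : ‖u‖ = 1) (hv : ‖v‖ = 1) (hw : ‖w‖ = 1) :
      δ * (J u w - J v w) ≤ ε * δ + ‖u - v‖ := by
    have hδw : ‖δ • w‖ = δ := by rw [norm_smul, hw, Real.norm_of_nonneg hδ.le, mul_one]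
    have hplus : 1 + δ * J u w ≤ ‖u + δ • w‖ :=
      calc 1 + δ * J u w = J u (u + δ • w) := by simp [(hJ u).1, hu]
        _ ≤ ‖u + δ • w‖ := by
          simpa [hu] using
            (Real.le_norm_self _).trans ((J u).le_of_opNorm_le (hJ u).2.le (u + δ • w))
    have hminus : 1 - δ * J v w ≤ ‖u - δ • w‖ + ‖u - v‖ :=
      calc 1 - δ * J v w = J v (v - δ • w) := by simp [(hJ v).1, hv]
        _ ≤ ‖v - δ • w‖ := by
          simpa [hv] using
            (Real.le_norm_self _).trans ((J v).le_of_opNorm_le (hJ v).2.le (v - δ • w))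
        _ ≤ ‖u - δ • w‖ + ‖u - v‖ := by
          simpa [sub_sub_sub_cancel_left, add_comm] using norm_sub_le (u - δ • w) (u - v)
    have := hsmooth u (δ • w) hu hδw.le
    rw [hδw] at this
    linarith
  refine ContinuousLinearMap.opNorm_le_of_unit_norm (by positivity) fun w hw => ?_
  have h₁ := hbound hu hv hw
  have h₂ := hbound hu hv (w := -w) (by rwa [norm_neg])
  simp only [map_neg] at h₂
  rw [Real.norm_eq_abs, abs_le, sub_apply,
    show ε + ‖u - v‖ / δ = (ε * δ + ‖u - v‖) / δ by field_simp, neg_le, le_div_iff₀ hδ,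
    le_div_iff₀ hδ]
  constructor <;> linarith

theorem IsDualityMap.continuous (hJ : IsDualityMap J) (hsm : UniformlySmooth X) :
    Continuous J := by
  have hsphere : ContinuousOn J (Metric.sphere 0 1) := by
    refine UniformContinuousOn.continuousOn <| Metric.uniformContinuousOn_iff.mpr fun ε hε => ?_
    obtain ⟨δ, hδ, h⟩ := hJ.norm_sub_le_of_norm_eq_one hsm (half_pos hε)
    refine ⟨ε / 2 * δ, by positivity, fun u hu v hv huv => ?_⟩
    rw [mem_sphere_zero_iff_norm] at hu hv
    rw [dist_eq_norm] at huv ⊢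
    calc ‖J u - J v‖ ≤ ε / 2 + ‖u - v‖ / δ := h u v hu hv
      _ < ε := by linarith [(div_lt_iff₀ hδ).mpr huv]
  have hnormalize : ContinuousOn (fun x : X => ‖x‖⁻¹ • x) {0}ᶜ :=
    (continuous_norm.continuousOn.inv₀ fun x hx => norm_ne_zero_iff.mpr hx).smul
      continuousOn_id
  have hoff : ContinuousOn J {0}ᶜ := by
    refine ((continuous_norm.continuousOn).smul (hsphere.comp hnormalize fun x hx => ?_)).congr
      fun x hx => ?_
    · simp [norm_smul, norm_ne_zero_iff.mpr hx]
    · simp [← hJ.map_smul hsm, smul_smul, norm_ne_zero_iff.mpr hx]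
  refine continuous_iff_continuousAt.mpr fun x₀ => ?_
  rcases eq_or_ne x₀ 0 with rfl | hx₀
  · rw [ContinuousAt, hJ.map_zero, tendsto_iff_norm_sub_tendsto_zero]
    simpa only [sub_zero, (hJ _).2] using tendsto_norm_zero
  · exact hoff.continuousAt (isOpen_compl_singleton.mem_nhds hx₀)

end DualityMap

section LinearAlgebra

def Convex.toSubmodule {V : Type*} [AddCommGroup V] [Module ℝ V] {s : Set V} (hs : Convex ℝ s)
    (h0 : (0 : V) ∈ s) (hsmul : ∀ c : ℝ, ∀ x ∈ s, c • x ∈ s) : Submodule ℝ V where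
  carrier := s
  zero_mem' := h0
  smul_mem' c x hx := hsmul c x hx
  add_mem' {x y} hx hy := by
    have hmid : (1 / 2 : ℝ) • x + (1 / 2 : ℝ) • y ∈ s :=
      hs hx hy (by norm_num) (by norm_num) (by norm_num)
    convert hsmul 2 _ hmid using 1
    module

theorem LinearMap.finrank_eq_of_nondegenerate {K M N : Type*} [Field K] [AddCommGroup M]
    [Module K M] [AddCommGroup N] [Module K N] (B : N →ₗ[K] M →ₗ[K] K) {D : Submodule K N}
    {E : Submodule K M} [FiniteDimensional K D]
    (hD : ∀ φ ∈ D, (∀ u ∈ E, B φ u = 0) → φ = 0) (hE : ∀ u ∈ E, (∀ φ ∈ D, B φ u = 0) → u = 0) :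
    finrank K E = finrank K D := by
  let B' := B.domRestrict₁₂ D E
  have hinjD : Injective B' := (injective_iff_map_eq_zero B').mpr fun φ hφ =>
    Subtype.ext <| hD φ φ.2 fun u hu => LinearMap.congr_fun hφ ⟨u, hu⟩
  have hinjE : Injective B'.flip := (injective_iff_map_eq_zero B'.flip).mpr fun u hu =>
    Subtype.ext <| hE u u.2 fun φ hφ => LinearMap.congr_fun hu ⟨φ, hφ⟩
  have : FiniteDimensional K E := Module.Finite.of_injective B'.flip hinjE
  exact le_antisymm
    ((LinearMap.finrank_le_finrank_of_injective hinjE).trans Subspace.dual_finrank_eq.le)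
    ((LinearMap.finrank_le_finrank_of_injective hinjD).trans Subspace.dual_finrank_eq.le)

variable {X : Type*} [NormedAddCommGroup X] [NormedSpace ℝ X]

theorem StrongDual.mem_of_forall_apply_eq_zero {D : Submodule ℝ (StrongDual ℝ X)}
    [FiniteDimensional ℝ D] {ψ : StrongDual ℝ X} (h : ∀ z : X, (∀ φ ∈ D, φ z = 0) → ψ z = 0) :
    ψ ∈ D := by
  let W : Submodule ℝ (Module.Dual ℝ X) := D.map (ContinuousLinearMap.coeLM ℝ)
  have hψ : (ψ : Module.Dual ℝ X) ∈ W.dualCoannihilator.dualAnnihilator := by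
    refine (Submodule.mem_dualAnnihilator _).mpr fun z hz => h z fun φ hφ => ?_
    exact (Submodule.mem_dualCoannihilator z).mp hz _ ⟨φ, hφ, rfl⟩
  rw [Subspace.dualCoannihilator_dualAnnihilator_eq] at hψ
  obtain ⟨φ, hφ, hφψ⟩ := hψ
  rwa [← ContinuousLinearMap.coe_injective hφψ]

theorem StrongDual.exists_apply_eq_one_apply_eq_zero {f g : StrongDual ℝ X}
    (h : LinearIndependent ℝ ![f, g]) : ∃ p : X, f p = 1 ∧ g p = 0 := by
  obtain ⟨z, hgz, hfz⟩ : ∃ z, g z = 0 ∧ f z ≠ 0 := by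
    by_contra! hcon
    obtain ⟨a, ha⟩ := Submodule.mem_span_singleton.mp <|
      StrongDual.mem_of_forall_apply_eq_zero (D := ℝ ∙ g) fun z hz =>
        hcon z (hz g (Submodule.mem_span_singleton_self g))
    exact (linearIndependent_fin2.mp h).2 a ha
  exact ⟨(f z)⁻¹ • z, by simp [hfz], by simp [hgz]⟩

theorem LinearIndependent.pair_map {K M N : Type*} [Field K] [AddCommGroup M] [Module K M]
    [AddCommGroup N] [Module K N] {f : M → N} (hf : Injective f)
    (hsmul : ∀ (c : K) (m : M), f (c • m) = c • f m) {x y : M}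
    (h : LinearIndependent K ![x, y]) : LinearIndependent K ![f x, f y] := by
  have hf0 : f 0 = 0 := by simpa using hsmul 0 0
  rw [linearIndependent_fin2] at h ⊢
  refine ⟨fun hy => h.1 (hf (hy.trans hf0.symm)), fun a ha => h.2 a (hf ?_)⟩
  simpa [hsmul] using ha

theorem exists_nonneg_smul_eq_of_not_linearIndependent {K V : Type*} [Field K] [LinearOrder K]
    [IsStrictOrderedRing K] [AddCommGroup V] [Module K V] {x y : V}
    (h : ¬LinearIndependent K ![x, y]) {a b : K} (ha : 0 ≤ a) (hb : 0 ≤ b) :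
    ∃ μ : K, 0 ≤ μ ∧ (a • x + b • y = μ • x ∨ a • x + b • y = μ • y) := by
  rw [linearIndependent_fin2] at h
  simp only [Matrix.cons_val_one, Matrix.cons_val_zero, not_and_or, not_not, not_forall] at h
  rcases h with rfl | ⟨c, rfl⟩
  · exact ⟨a, ha, .inl (by simp)⟩
  have hxy : a • c • y + b • y = (a * c + b) • y := by module
  rcases le_or_gt 0 (a * c + b) with hμ | hμ
  · exact ⟨a * c + b, hμ, .inr hxy⟩
  · have hc : c < 0 := by
      by_contra! hc
      nlinarith
    refine ⟨(a * c + b) / c, div_nonneg_of_nonpos hμ.le hc.le, .inl ?_⟩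
    rw [hxy, smul_smul, div_mul_cancel₀ _ hc.ne]

end LinearAlgebra

theorem IsPreconnected.pos_of_ne_zero {α : Type*} [TopologicalSpace α] {s : Set α}
    (hs : IsPreconnected s) {f : α → ℝ} (hf : ContinuousOn f s) {a : α} (ha : a ∈ s)
    (hfa : 0 < f a) (hne : ∀ x ∈ s, f x ≠ 0) {x : α} (hx : x ∈ s) : 0 < f x := by
  by_contra! hfx
  obtain ⟨c, hc, hfc⟩ := hs.intermediate_value hx ha hf ⟨hfx, hfa.le⟩
  exact hne c hc hfc

section Planes

variable {X : Type*} [NormedAddCommGroup X] [NormedSpace ℝ X] {J : X → StrongDual ℝ X}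

theorem IsDualityMap.convex_preimage (hJ : IsDualityMap J) (hsm : UniformlySmooth X)
    (hpolar : ∀ K : Set X, IsClosed K → Convex ℝ K → (0 : X) ∈ K →
      (∀ t : ℝ, 0 ≤ t → ∀ x ∈ K, t • x ∈ K) → Convex ℝ (conePolar K))
    (D : Submodule ℝ (StrongDual ℝ X)) [FiniteDimensional ℝ D] : Convex ℝ (J ⁻¹' D) := by
  let K : Set X := {z | ∀ φ ∈ D, φ z = 0}
  have hcone : ∀ t : ℝ, 0 ≤ t → ∀ z ∈ K, t • z ∈ K := fun t _ z hz φ hφ => by simp [hz φ hφ]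
  have hK : conePolar K = J ⁻¹' D := by
    ext x
    rw [hJ.mem_conePolar_iff hsm hcone, mem_preimage, SetLike.mem_coe]
    refine ⟨fun hx => StrongDual.mem_of_forall_apply_eq_zero fun z hz => ?_,
      fun hx z hz => (hz _ hx).le⟩
    refine le_antisymm (hx z hz) ?_
    simpa using hx (-z) fun φ hφ => by simp [hz φ hφ]
  rw [← hK]
  refine hpolar K ?_ ?_ (fun φ _ => φ.map_zero) hcone
  · simp only [K, ofPred_forall]
    exact isClosed_iInter fun φ => isClosed_iInter fun _ => isClosed_eq φ.continuous
      continuous_const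
  · intro z hz w hw a b _ _ _ φ hφ
    simp [hz φ hφ, hw φ hφ]

theorem IsDualityMap.exists_submodule_eq_preimage (hJ : IsDualityMap J) (hsm : UniformlySmooth X)
    (hsurj : Surjective J) (D : Submodule ℝ (StrongDual ℝ X)) [FiniteDimensional ℝ D]
    (hconv : Convex ℝ (J ⁻¹' D)) :
    ∃ E : Submodule ℝ X, finrank ℝ E = finrank ℝ D ∧ (E : Set X) = J ⁻¹' D := by
  let E := hconv.toSubmodule (by simp [hJ.map_zero]) fun c x hx => by
    simpa [hJ.map_smul hsm] using D.smul_mem c hx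
  refine ⟨E, (ContinuousLinearMap.coeLM ℝ).finrank_eq_of_nondegenerate (fun φ hφ h => ?_)
    (fun u hu h => hJ.eq_zero_of_apply_self (h _ hu)), rfl⟩
  obtain ⟨u, rfl⟩ := hsurj φ
  rw [hJ.eq_zero_of_apply_self (h u hφ), hJ.map_zero]

theorem IsDualityMap.apply_pos_of_mem_Ico (hJ : IsDualityMap J) (hsm : UniformlySmooth X)
    (hinj : Injective J) {x y p : X} (hxy : LinearIndependent ℝ ![x, y]) (hpx : J x p = 1)
    (hpy : J y p = 0) (hconv : Convex ℝ (J ⁻¹' Submodule.span ℝ {J x, J y})) {s : ℝ}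
    (hs : s ∈ Ico (0 : ℝ) 1) : 0 < J ((1 - s) • x + s • y) p := by
  have hseg {s : ℝ} (hs : s ∈ Ico (0 : ℝ) 1) :
      J ((1 - s) • x + s • y) ∈ Submodule.span ℝ {J x, J y} :=
    hconv (Submodule.subset_span (by simp)) (Submodule.subset_span (by simp))
      (by linarith [hs.2]) hs.1 (by ring)
  refine isPreconnected_Ico.pos_of_ne_zero (f := fun s => J ((1 - s) • x + s • y) p)
    (((hJ.continuous hsm).comp (by fun_prop)).clm_apply continuous_const).continuousOn
    (left_mem_Ico.mpr one_pos) (by simp [hpx]) (fun s hs hzero => ?_) hs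
  -- If the coordinate along `J x` vanished, `J` would map the segment point into `ℝ ∙ J y`, so the
  -- point would lie in `ℝ ∙ y`.
  obtain ⟨α, β, hαβ⟩ := Submodule.mem_span_pair.mp (hseg hs)
  have hα : α = 0 := by simpa [← hαβ, hpx, hpy] using hzero
  have hγ : (1 - s) • x + s • y = β • y :=
    hinj (by rw [hJ.map_smul hsm, ← hαβ, hα, zero_smul, zero_add])
  have := LinearIndependent.pair_iff.mp hxy (1 - s) (s - β)
    (by rw [sub_smul s, ← add_sub_assoc, hγ, sub_self])
  linarith [hs.2, this.1]

theorem IsDualityMap.exists_pos_smul_add_smul_of_linearIndependent (hJ : IsDualityMap J)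
    (hsm : UniformlySmooth X) (hinj : Injective J) {x y : X} (hxy : LinearIndependent ℝ ![x, y])
    (hconv : Convex ℝ (J ⁻¹' Submodule.span ℝ {J x, J y})) {a b : ℝ} (ha : 0 < a) (hb : 0 < b)
    (hab : a + b = 1) :
    ∃ α β : ℝ, 0 < α ∧ 0 < β ∧ J (a • x + b • y) = α • J x + β • J y := by
  have hJxy := hxy.pair_map hinj (hJ.map_smul hsm)
  obtain ⟨p, hpx, hpy⟩ := StrongDual.exists_apply_eq_one_apply_eq_zero hJxy
  obtain ⟨q, hqy, hqx⟩ :=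
    StrongDual.exists_apply_eq_one_apply_eq_zero (LinearIndependent.pair_symm_iff.mp hJxy)
  have hmem : J (a • x + b • y) ∈ Submodule.span ℝ {J x, J y} :=
    hconv (Submodule.subset_span (by simp)) (Submodule.subset_span (by simp)) ha.le hb.le hab
  obtain ⟨α, β, hαβ⟩ := Submodule.mem_span_pair.mp hmem
  refine ⟨α, β, ?_, ?_, hαβ.symm⟩
  · have h := hJ.apply_pos_of_mem_Ico hsm hinj hxy hpx hpy hconv (s := b) ⟨hb.le, by linarith⟩
    rw [show 1 - b = a by linarith, ← hαβ] at h
    simpa [hpx, hpy] using h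
  · have h := hJ.apply_pos_of_mem_Ico hsm hinj (LinearIndependent.pair_symm_iff.mp hxy) hqy hqx
      (by rwa [pair_comm]) (s := a) ⟨ha.le, by linarith⟩
    rw [show 1 - a = b by linarith, add_comm, ← hαβ] at h
    simpa [hqx, hqy] using h

theorem IsDualityMap.exists_nonneg_smul_add_smul (hJ : IsDualityMap J) (hsm : UniformlySmooth X)
    (hinj : Injective J)
    (hplanes : ∀ D : Submodule ℝ (StrongDual ℝ X), finrank ℝ D = 2 → Convex ℝ (J ⁻¹' D))
    (x y : X) {a b : ℝ} (ha : 0 < a) (hb : 0 < b) (hab : a + b = 1) :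
    ∃ α β : ℝ, 0 ≤ α ∧ 0 ≤ β ∧ J (a • x + b • y) = α • J x + β • J y := by
  by_cases hxy : LinearIndependent ℝ ![x, y]
  · have hD : finrank ℝ (Submodule.span ℝ {J x, J y}) = 2 := by
      have := finrank_span_eq_card (hxy.pair_map hinj (hJ.map_smul hsm))
      rwa [Matrix.range_cons_cons_empty, Fintype.card_fin] at this
    obtain ⟨α, β, hα, hβ, h⟩ := hJ.exists_pos_smul_add_smul_of_linearIndependent hsm hinj hxy
      (hplanes _ hD) ha hb hab
    exact ⟨α, β, hα.le, hβ.le, h⟩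
  · obtain ⟨μ, hμ, h | h⟩ := exists_nonneg_smul_eq_of_not_linearIndependent hxy ha.le hb.le
    · exact ⟨μ, 0, hμ, le_rfl, by rw [h, hJ.map_smul hsm, zero_smul, add_zero]⟩
    · exact ⟨0, μ, le_rfl, hμ, by rw [h, hJ.map_smul hsm, zero_smul, zero_add]⟩

theorem IsDualityMap.convex_conePolar (hJ : IsDualityMap J) (hsm : UniformlySmooth X)
    (hinj : Injective J)
    (hplanes : ∀ D : Submodule ℝ (StrongDual ℝ X), finrank ℝ D = 2 → Convex ℝ (J ⁻¹' D))
    {K : Set X} (hK : ∀ t : ℝ, 0 ≤ t → ∀ z ∈ K, t • z ∈ K) : Convex ℝ (conePolar K) := by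
  refine convex_iff_pairwise_pos.mpr fun x hx y hy _ a b ha hb hab => ?_
  rw [hJ.mem_conePolar_iff hsm hK] at hx hy ⊢
  obtain ⟨α, β, hα, hβ, h⟩ := hJ.exists_nonneg_smul_add_smul hsm hinj hplanes x y ha hb hab
  intro z hz
  rw [h, add_apply, smul_apply, smul_apply, smul_eq_mul, smul_eq_mul]
  exact add_nonpos (mul_nonpos_of_nonneg_of_nonpos hα (hx z hz))
    (mul_nonpos_of_nonneg_of_nonpos hβ (hy z hz))

end Planes

theorem convex_polar_iff_duality_planes_general {X : Type*} [NormedAddCommGroup X] [NormedSpace ℝ X]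
    (hsm : UniformlySmooth X)
    (J : X → StrongDual ℝ X)
    (hJ : ∀ x : X, J x x = ‖x‖ ^ 2 ∧ ‖J x‖ = ‖x‖)
    (Js : StrongDual ℝ X → X)
    (hJs : Function.LeftInverse Js J ∧ Function.RightInverse Js J) :
    (∀ K : Set X, IsClosed K → Convex ℝ K → (0 : X) ∈ K →
        (∀ t : ℝ, 0 ≤ t → ∀ x ∈ K, t • x ∈ K) → Convex ℝ (conePolar K)) ↔
    (∀ D : Submodule ℝ (StrongDual ℝ X), Module.finrank ℝ D = 2 →
        ∃ E : Submodule ℝ X, Module.finrank ℝ E = 2 ∧ Js '' (D : Set (StrongDual ℝ X)) = E) := by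
  have hJ' : IsDualityMap J := hJ
  have hpre (D : Submodule ℝ (StrongDual ℝ X)) : Js '' D = J ⁻¹' D := by
    rw [image_eq_preimage_of_inverse hJs.2 hJs.1]
  constructor
  · intro hpolar D hD
    have : FiniteDimensional ℝ D := .of_finrank_eq_succ hD
    obtain ⟨E, hE, hED⟩ := hJ'.exists_submodule_eq_preimage hsm hJs.2.surjective D
      (hJ'.convex_preimage hsm hpolar D)
    exact ⟨E, hE.trans hD, (hpre D).trans hED.symm⟩
  · intro hplanes K _ _ _ hK
    refine hJ'.convex_conePolar hsm hJs.1.injective (fun D hD => ?_) hK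
    obtain ⟨E, -, hE⟩ := hplanes D hD
    rw [← hpre, hE]
    exact E.convex

/-- Main Theorem: In a uniformly convex, uniformly smooth real Banach space
with normalized duality map `J` (a bijection with inverse `Js = J*`), every closed convex
cone has convex polar iff `J*` maps every two-dimensional subspace of `X*` onto a
two-dimensional subspace of `X`. -/
theorem convex_polar_iff_duality_planes {X : Type*} [NormedAddCommGroup X] [NormedSpace ℝ X]
    [CompleteSpace X] [UniformConvexSpace X] (hsm : UniformlySmooth X)
    (J : X → StrongDual ℝ X)
    (hJ : ∀ x : X, J x x = ‖x‖ ^ 2 ∧ ‖J x‖ = ‖x‖)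
    (Js : StrongDual ℝ X → X)
    (hJs : Function.LeftInverse Js J ∧ Function.RightInverse Js J) :
    (∀ K : Set X, IsClosed K → Convex ℝ K → (0 : X) ∈ K →
        (∀ t : ℝ, 0 ≤ t → ∀ x ∈ K, t • x ∈ K) → Convex ℝ (conePolar K)) ↔
    (∀ D : Submodule ℝ (StrongDual ℝ X), Module.finrank ℝ D = 2 →
        ∃ E : Submodule ℝ X, Module.finrank ℝ E = 2 ∧ Js '' (D : Set (StrongDual ℝ X)) = E) :=
  convex_polar_iff_duality_planes_general hsm J hJ Js hJs
end

section
/- Let X be a real normed space, and let K ⊆ X be a cone (closed under nonnegative scalar multiplication) such that K ≠ X and K is maximal among cones different from X (no cone other than X properly contains K). If K is closed and convex, then K is a closed halfspace {x : f(x) ≤ 0} for some nonzero f ∈ X*. -/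
/-!
Since `K` is a closed convex set missing some point `x₀`, Hahn–Banach gives `f ∈ X*` and `u` with
`f < u` on `K` and `u < f x₀`. A linear functional bounded above on a cone is `≤ 0` on it, and
`0 ∈ K` forces `0 < u`; so `K ⊆ {f ≤ 0}`, a cone not containing `x₀`. Maximality of `K` then gives
equality.
-/

def IsCone {E : Type*} [SMul ℝ E] (C : Set E) : Prop :=
  ∀ t : ℝ, 0 ≤ t → ∀ x ∈ C, t • x ∈ C

namespace IsCone

variable {E : Type*} [AddCommGroup E] [Module ℝ E] {C : Set E}

theorem zero_mem (hC : IsCone C) (hne : C.Nonempty) : (0 : E) ∈ C := by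
  obtain ⟨x, hx⟩ := hne
  simpa using hC 0 le_rfl x hx

variable [TopologicalSpace E]

theorem setOf_map_nonpos (f : StrongDual ℝ E) : IsCone {x : E | f x ≤ 0} := by
  intro t ht x hx
  show f (t • x) ≤ 0
  rw [map_smul, smul_eq_mul]
  exact mul_nonpos_of_nonneg_of_nonpos ht hx

theorem map_nonpos_of_forall_lt (hC : IsCone C) {f : StrongDual ℝ E} {u : ℝ}
    (hf : ∀ x ∈ C, f x < u) {x : E} (hx : x ∈ C) : f x ≤ 0 := by
  by_contra! hpos
  -- Rescaling `x` so that `f` takes the value `|u| ≥ u` on it.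
  have hscaled := hf ((|u| / f x) • x) (hC _ (by positivity) x hx)
  rw [map_smul, smul_eq_mul, div_mul_cancel₀ _ hpos.ne'] at hscaled
  exact (le_abs_self u).not_gt hscaled

variable [IsTopologicalAddGroup E] [ContinuousSMul ℝ E] [LocallyConvexSpace ℝ E]

theorem exists_map_nonpos_of_notMem (hC : IsCone C) (hne : C.Nonempty) (hconv : Convex ℝ C)
    (hcl : IsClosed C) {x₀ : E} (hx₀ : x₀ ∉ C) :
    ∃ f : StrongDual ℝ E, (∀ x ∈ C, f x ≤ 0) ∧ 0 < f x₀ := by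
  obtain ⟨f, u, hfC, hfx₀⟩ := geometric_hahn_banach_closed_point hconv hcl hx₀
  have hu : 0 < u := by simpa using hfC 0 (hC.zero_mem hne)
  exact ⟨f, fun x hx => hC.map_nonpos_of_forall_lt hfC hx, hu.trans hfx₀⟩

end IsCone

/-- In a real normed space, a closed convex hypercone (a cone `K ≠ X` maximal
among cones different from `X`) is a closed halfspace `{x | f x ≤ 0}` for some nonzero
`f ∈ X*`. -/
theorem hypercone_is_halfspace {X : Type*} [NormedAddCommGroup X] [NormedSpace ℝ X]
    (K : Set X) (hne : K.Nonempty)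
    (hcone : ∀ t : ℝ, 0 ≤ t → ∀ x ∈ K, t • x ∈ K)
    (hKne : K ≠ Set.univ)
    (hmax : ∀ C : Set X, (∀ t : ℝ, 0 ≤ t → ∀ x ∈ C, t • x ∈ C) → K ⊆ C →
      C ≠ Set.univ → C = K)
    (hcl : IsClosed K) (hconv : Convex ℝ K) :
    ∃ f : StrongDual ℝ X, f ≠ 0 ∧ K = {x : X | f x ≤ 0} := by
  obtain ⟨x₀, hx₀⟩ := (Set.ne_univ_iff_exists_notMem K).1 hKne
  obtain ⟨f, hfK, hfx₀⟩ := IsCone.exists_map_nonpos_of_notMem hcone hne hconv hcl hx₀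
  have hf : f ≠ 0 := by
    rintro rfl
    exact hfx₀.ne rfl
  have hhalf : {x : X | f x ≤ 0} ≠ Set.univ :=
    (Set.ne_univ_iff_exists_notMem _).2 ⟨x₀, hfx₀.not_ge⟩
  exact ⟨f, hf, (hmax _ (IsCone.setOf_map_nonpos f) hfK hhalf).symm⟩
end
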